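/- arXiv:2109.12443 — 5 statements merged into one kernel-verified Lean document; each statement's English description precedes it below -/
import Mathlib

section
/- Two conflicting transactions cannot both obtain commit certificates: if transaction T_i has a commit certificate (at least 3f+1 Commit votes on every involved shard of 5f+1 replicas, at most f Byzantine), and T_j conflicts with T_i on some common shard where every correct replica that committed T_i votes Abort for T_j, then T_j cannot gather 3f+1 Commit votes on that shard. -/
/-- Two conflicting transactions cannot both commit: if at least `2f+1`
correct replicas of the common shard committed `T_i` and each of them votes
Abort for the conflicting `T_j`, then any set `C` of replicas voting Commit
for `T_j` has fewer than `3f+1` members. -/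
theorem conflicting_txn_cannot_commit
    {α : Type*} [DecidableEq α] (f : ℕ) (R B D C : Finset α)
    (voteJ : α → Bool)
    (hR : R.card = 5 * f + 1)
    (hB : B ⊆ R) (hBcard : B.card ≤ f)
    (hD : D ⊆ R) (hDB : Disjoint D B) (hDcard : 2 * f + 1 ≤ D.card)
    (hDabort : ∀ r ∈ D, voteJ r = false)
    (hC : C ⊆ R)
    (hCcommit : ∀ r ∈ C, r ∉ B → voteJ r = true) :
    C.card < 3 * f + 1 := by
  have hCD : Disjoint C D := by
    rw [Finset.disjoint_left]
    intro r hrC hrD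
    have hBr : r ∉ B := fun h => Finset.disjoint_right.mp hDB h hrD
    have := hCcommit r hrC hBr
    rw [hDabort r hrD] at this
    exact Bool.false_ne_true this
  have hunion : (C ∪ D).card ≤ R.card :=
    Finset.card_le_card (Finset.union_subset hC hD)
  rw [Finset.card_union_of_disjoint hCD, hR] at hunion
  omega
end

section
/- A fast-path commit certificate (5f+1 unanimous Commit votes on every shard) and a fast-path abort certificate (3f+1 Abort votes on a single shard) cannot both exist for the same transaction, given that correct replicas vote at most once and at most f replicas per shard are Byzantine. -/
/-- A fast-path commit certificate (all `5f+1` replicas of the shard vote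
Commit) and a fast-path abort certificate (`3f+1` replicas of the same shard
vote Abort) cannot both exist, given single immutable votes of correct
replicas and at most `f` Byzantine replicas. -/
theorem fast_commit_fast_abort_exclusive
    {α : Type*} [DecidableEq α] (f : ℕ) (R B A : Finset α)
    (vote : α → Bool)
    (hR : R.card = 5 * f + 1)
    (hB : B ⊆ R) (hBcard : B.card ≤ f)
    (hCommitAll : ∀ r ∈ R, r ∉ B → vote r = true)
    (hA : A ⊆ R) (hAcard : A.card = 3 * f + 1)
    (hAbort : ∀ r ∈ A, r ∉ B → vote r = false) :
    False := by
  have h : (A \ B).Nonempty := by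
    rw [← Finset.card_pos]
    have := Finset.le_card_sdiff B A
    omega
  obtain ⟨r, hr⟩ := h
  rw [Finset.mem_sdiff] at hr
  have h1 := hCommitAll r (hA hr.1) hr.2
  have h2 := hAbort r hr.1 hr.2
  simp [h1] at h2
end

section
/- Two slow-path decision certificates with different decisions cannot coexist: two sets of n−f = 4f+1 matching P2R replies from a logging shard of 5f+1 replicas with at most f Byzantine, one set for Commit and one for Abort, must overlap in at least 2f+1 correct replicas, contradicting that correct replicas never change their logged decision. -/
/-- Two slow-path decision certificates with different decisions cannot
coexist: sets `C` and `A` of `4f+1` replicas each, logging Commit resp.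
Abort, would overlap in at least `2f+1` correct replicas, contradicting
that correct replicas never change their logged decision. -/
theorem slow_path_certs_exclusive
    {α : Type*} [DecidableEq α] (f : ℕ) (R B C A : Finset α)
    (decision : α → Bool)
    (hR : R.card = 5 * f + 1)
    (hB : B ⊆ R) (hBcard : B.card ≤ f)
    (hC : C ⊆ R) (hCcard : C.card = 4 * f + 1)
    (hA : A ⊆ R) (hAcard : A.card = 4 * f + 1)
    (hCommit : ∀ r ∈ C, r ∉ B → decision r = true)
    (hAbort : ∀ r ∈ A, r ∉ B → decision r = false) :
    False := by
  have hunion : (C ∪ A).card ≤ R.card := Finset.card_le_card (Finset.union_subset hC hA)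
  have hint : 3 * f + 1 ≤ (C ∩ A).card := by
    have := Finset.card_union_add_card_inter C A
    omega
  have hdiff : ((C ∩ A) \ B).Nonempty := by
    rw [← Finset.card_pos]
    have := Finset.card_le_card (Finset.sdiff_subset_sdiff (Finset.Subset.refl (C ∩ A)) (Finset.empty_subset B))
    have h2 : (C ∩ A).card - B.card ≤ ((C ∩ A) \ B).card := Finset.le_card_sdiff B (C ∩ A)
    omega
  obtain ⟨r, hr⟩ := hdiff
  simp only [Finset.mem_sdiff, Finset.mem_inter] at hr
  have h1 := hCommit r hr.1.1 hr.2
  have h2 := hAbort r hr.1.2 hr.2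
  simp [h1] at h2
end

section
/- Fallback durability: if at some view v at least 3f+1 correct replicas have adopted decision d, then every subsequently elected fallback leader, applying the majority rule over 4f+1 received decisions, can only propose d; hence by induction on views, all correct replicas' adopted decisions in all views ≥ v that were adopted via fallback equal d. -/
/-- Fallback durability: if at view `v` at least `3f+1` correct replicas
have adopted decision `d`, then every fallback leader at a later view,
proposing the majority among `4f+1` received decisions (where correct
replicas report their currently held decision and correct replicas only
change their decision by adopting the leader proposal), can only propose
`d`; by induction, at every view `w ≥ v` the proposal equals `d` and at
least `3f+1` correct replicas hold `d`. -/
theorem fallback_durability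
    {α : Type*} [DecidableEq α] (f v : ℕ) (R B D : Finset α) (d : Bool)
    (dec : ℕ → α → Bool)          -- decision held by each replica at each view
    (L : ℕ → Finset α)            -- replicas whose reports the leader at view w receives
    (rep : ℕ → α → Bool)          -- decision reported to the leader at view w
    (prop : ℕ → Bool)             -- leader proposal at view w
    (hR : R.card = 5 * f + 1)
    (hB : B ⊆ R) (hBcard : B.card ≤ f)
    (hL : ∀ w, L w ⊆ R ∧ (L w).card = 4 * f + 1)
    (hRep : ∀ w, ∀ r ∈ L w, r ∉ B → rep w r = dec w r)
    (hMaj : ∀ w, 2 * f + 1 ≤ ((L w).filter fun r => rep w r = prop w).card)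
    (hAdopt : ∀ w, v ≤ w → ∀ r ∈ R, r ∉ B →
      dec (w + 1) r = dec w r ∨ dec (w + 1) r = prop w)
    (hD : D ⊆ R) (hDB : Disjoint D B) (hDcard : 3 * f + 1 ≤ D.card)
    (hDd : ∀ r ∈ D, dec v r = d) :
    ∀ w, v ≤ w →
      prop w = d ∧
      3 * f + 1 ≤ ((R \ B).filter fun r => dec w r = d).card := by
  have key : ∀ w, 3 * f + 1 ≤ ((R \ B).filter fun r => dec w r = d).card →
      prop w = d := by
    intro w hw
    by_contra hne
    obtain ⟨hLsub, hLcard⟩ := hL w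
    set C := (R \ B).filter fun r => dec w r = d with hC
    have hCR : C ⊆ R := (Finset.filter_subset _ _).trans (Finset.sdiff_subset)
    set T := L w ∩ C with hT
    have hTcard : 2 * f + 1 ≤ T.card := by
      have hunion : (L w ∪ C).card ≤ R.card :=
        Finset.card_le_card (Finset.union_subset hLsub hCR)
      have h2 := Finset.card_union_add_card_inter (L w) C
      have h3 : (L w ∩ C).card = T.card := rfl
      omega
    set S := (L w).filter fun r => rep w r = prop w with hS
    have hdis : Disjoint S T := by
      rw [Finset.disjoint_left]
      intro r hrS hrT
      simp only [hS, Finset.mem_filter] at hrS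
      simp only [hT, hC, Finset.mem_inter, Finset.mem_filter, Finset.mem_sdiff] at hrT
      have hrep := hRep w r hrT.1 hrT.2.1.2
      rw [hrep, hrT.2.2] at hrS
      exact hne hrS.2.symm
    have hsub : S ∪ T ⊆ L w :=
      Finset.union_subset (Finset.filter_subset _ _) Finset.inter_subset_left
    have hcard : S.card + T.card ≤ (L w).card := by
      rw [← Finset.card_union_of_disjoint hdis]
      exact Finset.card_le_card hsub
    have hM : 2 * f + 1 ≤ S.card := hMaj w
    omega
  have inv : ∀ w, v ≤ w → 3 * f + 1 ≤ ((R \ B).filter fun r => dec w r = d).card := by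
    intro w hw
    induction w, hw using Nat.le_induction with
    | base =>
      have : D ⊆ (R \ B).filter fun r => dec v r = d := by
        intro r hr
        simp only [Finset.mem_filter, Finset.mem_sdiff]
        exact ⟨⟨hD hr, Finset.disjoint_left.mp hDB hr⟩, hDd r hr⟩
      exact hDcard.trans (Finset.card_le_card this)
    | succ w hw ih =>
      have hprop := key w ih
      have : ((R \ B).filter fun r => dec w r = d) ⊆
          ((R \ B).filter fun r => dec (w + 1) r = d) := by
        intro r hr
        simp only [Finset.mem_filter, Finset.mem_sdiff] at hr ⊢
        refine ⟨hr.1, ?_⟩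
        rcases hAdopt w hw r hr.1.1 hr.1.2 with h | h
        · rw [h, hr.2]
        · rw [h, hprop]
      exact ih.trans (Finset.card_le_card this)
  exact fun w hw => ⟨key w (inv w hw), inv w hw⟩
end

section
/- Fast-path in a lower replication regime is unsafe: if n ≤ 5f, then two quorums of size n − 2f need not intersect in a correct replica, i.e., there exist two subsets of size n − 2f of an n-element set and a Byzantine subset of size f such that the intersection of the two quorums is contained in the Byzantine subset. -/
/-- Fast path is unsafe with `n ≤ 5f`: there exist two quorums of size
`n − 2f` and a Byzantine set of size `f` such that the intersection of the
quorums is contained in the Byzantine set. -/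
theorem fast_path_unsafe_low_replication
    (n f : ℕ) (h1 : 2 * f < n) (h2 : n ≤ 5 * f) :
    ∃ (Q1 Q2 B : Finset (Fin n)),
      Q1.card = n - 2 * f ∧ Q2.card = n - 2 * f ∧ B.card = f ∧
      Q1 ∩ Q2 ⊆ B := by
  set q := n - 2 * f with hq
  have hQ1h : ∀ m ∈ Finset.range q, m < n := by
    intro m hm; simp [Finset.mem_range] at hm; omega
  have hQ2h : ∀ m ∈ Finset.Ico (2 * f) n, m < n := by
    intro m hm; simp [Finset.mem_Ico] at hm; omega
  have hCh : ∀ m ∈ Finset.Ico (2 * f) q, m < n := by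
    intro m hm; simp [Finset.mem_Ico] at hm; omega
  set Q1 := (Finset.range q).attachFin hQ1h
  set Q2 := (Finset.Ico (2 * f) n).attachFin hQ2h
  set C := (Finset.Ico (2 * f) q).attachFin hCh with hC
  have hCcard : C.card = n - 4 * f := by
    simp [hC, Finset.card_attachFin, Nat.card_Ico]; omega
  obtain ⟨B, hCB, hBcard⟩ := Finset.exists_superset_card_eq
    (by omega : C.card ≤ f) (by simp [Fintype.card_fin]; omega)
  refine ⟨Q1, Q2, B, ?_, ?_, hBcard, ?_⟩
  · simp [Q1, Finset.card_attachFin]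
  · simp [Q2, Finset.card_attachFin, Nat.card_Ico]; omega
  · intro i hi
    apply hCB
    simp [Q1, Q2, C, Finset.mem_attachFin, Finset.mem_inter, Finset.mem_Ico,
      Finset.mem_range] at hi ⊢
    omega
end
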